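/- Let n ≥ 3 and G = C_{n,n}, with X the odd vertices and Y the even vertices. Suppose T ⊆ [2n] is nonempty, T ⊄ X, and T ⊄ Y. Then T has the cut point property if and only if T = A ∪ {a+1 : a ∈ A} for some A ⊆ X with |A| = n - 2. -/

import Mathlib

open SimpleGraph

/-- The crown graph `C_{n,n}`: vertices `Fin (2*n)`, where index `2i-2` plays the role of the
odd-labelled vertex `2i-1` of the paper and index `2i-1` the even-labelled vertex `2i`.
An even index `u` and an odd index `v` are adjacent iff `v ≠ u + 1`. -/
def crownGraph (n : ℕ) : SimpleGraph (Fin (2 * n)) where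
  Adj u v := (u.val % 2 = 0 ∧ v.val % 2 = 1 ∧ v.val ≠ u.val + 1) ∨
             (v.val % 2 = 0 ∧ u.val % 2 = 1 ∧ u.val ≠ v.val + 1)
  symm := ⟨by intro u v h; tauto⟩
  loopless := ⟨by intro u h; rcases h with ⟨h1, h2, _⟩ | ⟨h1, h2, _⟩ <;> omega⟩

/-- The part `X` (odd-labelled vertices of the paper): even indices. -/
def crownX (n : ℕ) : Finset (Fin (2 * n)) := Finset.univ.filter (fun u => u.val % 2 = 0)

/-- The part `Y` (even-labelled vertices of the paper): odd indices. -/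
def crownY (n : ℕ) : Finset (Fin (2 * n)) := Finset.univ.filter (fun u => u.val % 2 = 1)


/-- Number of connected components of the induced subgraph on `s`. -/
noncomputable def numComponents {V : Type*} (G : SimpleGraph V) (s : Set V) : ℕ :=
  Nat.card (G.induce s).ConnectedComponent


/-- `T` has the cut point property: `T = ∅` or each `i ∈ T` is a cut vertex of the induced
subgraph on `Tᶜ ∪ {i}`, i.e. removing `i` increases the number of connected components. -/
def cutPointProperty {V : Type*} (G : SimpleGraph V) (T : Set V) : Prop :=
  T = ∅ ∨ ∀ i ∈ T, numComponents G Tᶜ > numComponents G (Tᶜ ∪ {i})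


/-- The successor map on `Fin (2*n)` (no wrap-around occurs on even indices). -/
def finSucc {n : ℕ} (a : Fin (2 * n)) : Fin (2 * n) :=
  ⟨(a.val + 1) % (2 * n), Nat.mod_lt _ a.pos⟩

/-! Adding a vertex `x` to `s` lowers the number of components of `G[s]` exactly when `x` has
neighbours in two different components of `G[s]`. So `T` has the cut point property iff every
`i ∈ T` joins two components of `G[Tᶜ]`. The crown graph is `K_{X,Y}` minus the perfect matching
of the pairs `{2i - 1, 2i}`, and such a graph on at least two vertices per side is connected
unless it consists of exactly two of these pairs. A vertex of `T ∩ X` (resp. `T ∩ Y`) joining two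
components of `G[Tᶜ]` forces two vertices of `Tᶜ` in `Y` (resp. `X`) and a disconnected `G[Tᶜ]`,
so `Tᶜ` is the union of two pairs. Conversely, the union of two pairs has two components, and each
vertex outside it is adjacent to both. -/

namespace SimpleGraph

variable {V : Type*} {G : SimpleGraph V}

theorem Reachable.apply_eq_of_adj {β : Sort*} {f : V → β} (hf : ∀ u v, G.Adj u v → f u = f v)
    {u v : V} (h : G.Reachable u v) : f u = f v := by
  obtain ⟨p⟩ := h
  induction p with
  | nil => rfl
  | cons hadj _ ih => exact (hf _ _ hadj).trans ih

theorem induce_reachable_of_adj {s : Set V} {a b : V} (ha : a ∈ s) (hb : b ∈ s) (h : G.Adj a b) :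
    (G.induce s).Reachable ⟨a, ha⟩ ⟨b, hb⟩ :=
  Adj.reachable h

def JoinsTwoComponents (G : SimpleGraph V) (s : Set V) (x : V) : Prop :=
  ∃ a b : s, G.Adj x a ∧ G.Adj x b ∧ ¬ (G.induce s).Reachable a b

variable [Finite V] {s : Set V} {x : V}

theorem numComponents_union_singleton_lt (h : G.JoinsTwoComponents s x) :
    numComponents G (s ∪ {x}) < numComponents G s := by
  obtain ⟨a, b, ha, hb, hab⟩ := h
  -- the inclusion `s → s ∪ {x}` is onto on components but identifies those of `a` and `b`
  let φ := ConnectedComponent.map (G.induceHomOfLE (s.subset_union_left (t := {x}))).toHom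
  have hxa : (G.induce (s ∪ {x})).Reachable ⟨a, Or.inl a.2⟩ ⟨x, Or.inr rfl⟩ :=
    induce_reachable_of_adj _ _ ha.symm
  have hxb : (G.induce (s ∪ {x})).Reachable ⟨b, Or.inl b.2⟩ ⟨x, Or.inr rfl⟩ :=
    induce_reachable_of_adj _ _ hb.symm
  have hsurj : φ.Surjective := by
    intro C
    obtain ⟨⟨y, hy | rfl⟩, rfl⟩ := C.exists_rep
    · exact ⟨(G.induce s).connectedComponentMk ⟨y, hy⟩, rfl⟩
    · exact ⟨(G.induce s).connectedComponentMk a, ConnectedComponent.sound hxa⟩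
  have hninj : ¬ φ.Injective := fun hinj =>
    hab (ConnectedComponent.eq.mp (hinj (ConnectedComponent.sound (hxa.trans hxb.symm))))
  exact lt_of_le_of_ne (Nat.card_le_card_of_surjective φ hsurj)
    fun heq => hninj (hsurj.bijective_of_nat_card_le heq.ge).1

theorem numComponents_le_union_singleton (h : ¬ G.JoinsTwoComponents s x) :
    numComponents G s ≤ numComponents G (s ∪ {x}) := by
  classical
  simp only [JoinsTwoComponents, not_exists, not_and, not_not] at h
  let φ := ConnectedComponent.map (G.induceHomOfLE (s.subset_union_left (t := {x}))).toHom
  refine Nat.card_le_card_of_injective φ fun C D hCD => ?_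
  obtain ⟨a, rfl⟩ := C.exists_rep
  obtain ⟨b, rfl⟩ := D.exists_rep
  -- retract `x` onto the one component of `G[s]` that contains all its neighbours
  obtain ⟨c₀, hc₀⟩ : ∃ c₀ : (G.induce s).ConnectedComponent,
      ∀ y : s, G.Adj x y → (G.induce s).connectedComponentMk y = c₀ := by
    by_cases hx : ∃ y : s, G.Adj x y
    · obtain ⟨y, hy⟩ := hx
      exact ⟨_, fun z hz => ConnectedComponent.sound (h z y hz hy)⟩
    · exact ⟨(G.induce s).connectedComponentMk a, fun y hy => absurd ⟨y, hy⟩ hx⟩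
  let f : ↥(s ∪ {x}) → (G.induce s).ConnectedComponent := fun y =>
    if hy : y.1 ∈ s then (G.induce s).connectedComponentMk ⟨y.1, hy⟩ else c₀
  have hf : ∀ y z, (G.induce (s ∪ {x})).Adj y z → f y = f z := by
    rintro ⟨y, hy'⟩ ⟨z, hz'⟩ hyz
    by_cases hy : y ∈ s <;> by_cases hz : z ∈ s <;> simp only [f, hy, hz, dite_true, dite_false]
    · exact ConnectedComponent.sound (induce_reachable_of_adj hy hz hyz)
    · obtain rfl : z = x := hz'.resolve_left hz
      exact hc₀ ⟨y, hy⟩ hyz.symm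
    · obtain rfl : y = x := hy'.resolve_left hy
      exact (hc₀ ⟨z, hz⟩ hyz).symm
  have hfs : ∀ y : s, f ⟨y, Or.inl y.2⟩ = (G.induce s).connectedComponentMk y := fun y => dif_pos y.2
  exact (hfs a).symm.trans (((ConnectedComponent.eq.mp hCD).apply_eq_of_adj hf).trans (hfs b))

theorem numComponents_union_singleton_lt_iff :
    numComponents G (s ∪ {x}) < numComponents G s ↔ G.JoinsTwoComponents s x :=
  ⟨fun hlt => by_contra fun h => (numComponents_le_union_singleton h).not_gt hlt,
    numComponents_union_singleton_lt⟩

end SimpleGraph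

section Crown

/-! A vertex `x` of `crownGraph n` lies on the side `x.val % 2` and in the non-adjacent pair
`{2k, 2k + 1}` with `k = x.val / 2`. -/

variable {n : ℕ}

theorem crownGraph_adj_iff {x y : Fin (2 * n)} :
    (crownGraph n).Adj x y ↔ x.val % 2 ≠ y.val % 2 ∧ x.val / 2 ≠ y.val / 2 := by
  simp only [crownGraph]
  omega

theorem crownGraph_adj_or_adj {x y₁ y₂ : Fin (2 * n)} (hne : y₁ ≠ y₂)
    (h₁ : y₁.val % 2 ≠ x.val % 2) (h₂ : y₂.val % 2 ≠ x.val % 2) :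
    (crownGraph n).Adj x y₁ ∨ (crownGraph n).Adj x y₂ := by
  have := Fin.val_ne_of_ne hne
  simp only [crownGraph_adj_iff]
  omega

variable {S : Set (Fin (2 * n))}

theorem crownGraph_induce_preconnected_of_reachable {y₁ y₂ : Fin (2 * n)} (hy₁ : y₁ ∈ S)
    (hy₂ : y₂ ∈ S) (hne : y₁ ≠ y₂) (hpy₂ : y₂.val % 2 = y₁.val % 2)
    (hreach : ∀ z (hz : z ∈ S), z.val % 2 = y₁.val % 2 →
      ((crownGraph n).induce S).Reachable ⟨z, hz⟩ ⟨y₁, hy₁⟩) :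
    ((crownGraph n).induce S).Preconnected := by
  suffices h : ∀ z (hz : z ∈ S), ((crownGraph n).induce S).Reachable ⟨z, hz⟩ ⟨y₁, hy₁⟩ from
    fun u v => (h u u.2).trans (h v v.2).symm
  intro z hz
  by_cases hz₁ : z.val % 2 = y₁.val % 2
  · exact hreach z hz hz₁
  rcases crownGraph_adj_or_adj hne (Ne.symm hz₁) (by omega) with h | h
  · exact induce_reachable_of_adj hz hy₁ h
  · exact (induce_reachable_of_adj hz hy₂ h).trans (hreach y₂ hy₂ hpy₂)

theorem crownGraph_induce_preconnected_of_unmated {x y₁ y₂ : Fin (2 * n)} (hx : x ∈ S)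
    (hy₁ : y₁ ∈ S) (hy₂ : y₂ ∈ S) (hne : y₁ ≠ y₂) (hpy₁ : y₁.val % 2 ≠ x.val % 2)
    (hpy₂ : y₂.val % 2 ≠ x.val % 2)
    (hunmated : ∀ y ∈ S, y.val % 2 ≠ x.val % 2 → y.val / 2 ≠ x.val / 2) :
    ((crownGraph n).induce S).Preconnected := by
  have hadj : ∀ z (hz : z ∈ S), z.val % 2 ≠ x.val % 2 →
      ((crownGraph n).induce S).Reachable ⟨z, hz⟩ ⟨x, hx⟩ := fun z hz hzx =>
    induce_reachable_of_adj hz hx (crownGraph_adj_iff.mpr ⟨hzx, hunmated z hz hzx⟩)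
  refine crownGraph_induce_preconnected_of_reachable hy₁ hy₂ hne (by omega) fun z hz hz₁ => ?_
  exact (hadj z hz (by omega)).trans (hadj y₁ hy₁ hpy₁).symm

theorem crownGraph_induce_preconnected_of_three {w₁ w₂ w₃ y₁ y₂ : Fin (2 * n)} (hw₁ : w₁ ∈ S)
    (hw₂ : w₂ ∈ S) (hw₃ : w₃ ∈ S) (hy₁ : y₁ ∈ S) (hy₂ : y₂ ∈ S) (hw₁₂ : w₁ ≠ w₂)
    (hw₁₃ : w₁ ≠ w₃) (hw₂₃ : w₂ ≠ w₃) (hpw₂ : w₂.val % 2 = w₁.val % 2)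
    (hpw₃ : w₃.val % 2 = w₁.val % 2) (hne : y₁ ≠ y₂) (hpy₁ : y₁.val % 2 ≠ w₁.val % 2)
    (hpy₂ : y₂.val % 2 ≠ w₁.val % 2) :
    ((crownGraph n).induce S).Preconnected := by
  refine crownGraph_induce_preconnected_of_reachable hy₁ hy₂ hne (by omega) fun z hz hz₁ => ?_
  -- the three `w`s lie in three different pairs, so one of them is adjacent to both `z` and `y₁`
  obtain ⟨w, hw, hzw, hwy⟩ : ∃ w ∈ S, (crownGraph n).Adj z w ∧ (crownGraph n).Adj w y₁ := by
    have := Fin.val_ne_of_ne hw₁₂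
    have := Fin.val_ne_of_ne hw₁₃
    have := Fin.val_ne_of_ne hw₂₃
    simp only [crownGraph_adj_iff]
    by_cases h₁ : w₁.val / 2 ≠ z.val / 2 ∧ w₁.val / 2 ≠ y₁.val / 2
    · exact ⟨w₁, hw₁, by omega, by omega⟩
    by_cases h₂ : w₂.val / 2 ≠ z.val / 2 ∧ w₂.val / 2 ≠ y₁.val / 2
    · exact ⟨w₂, hw₂, by omega, by omega⟩
    · exact ⟨w₃, hw₃, by omega, by omega⟩
  exact (induce_reachable_of_adj hz hw hzw).trans (induce_reachable_of_adj hw hy₁ hwy)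

theorem crownGraph_mem_iff_of_not_preconnected {u₁ u₂ v₁ v₂ : Fin (2 * n)} (hu₁ : u₁ ∈ S)
    (hu₂ : u₂ ∈ S) (hv₁ : v₁ ∈ S) (hv₂ : v₂ ∈ S) (hu : u₁ ≠ u₂) (hv : v₁ ≠ v₂)
    (hpu₁ : u₁.val % 2 = 0) (hpu₂ : u₂.val % 2 = 0) (hpv₁ : v₁.val % 2 = 1)
    (hpv₂ : v₂.val % 2 = 1) (hS : ¬ ((crownGraph n).induce S).Preconnected) (x : Fin (2 * n)) :
    x ∈ S ↔ x.val / 2 = u₁.val / 2 ∨ x.val / 2 = u₂.val / 2 := by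
  have evens : ∀ w ∈ S, w.val % 2 = 0 → w = u₁ ∨ w = u₂ := by
    intro w hw hpw
    by_contra! h
    exact hS (crownGraph_induce_preconnected_of_three hu₁ hu₂ hw hv₁ hv₂ hu (Ne.symm h.1)
      (Ne.symm h.2) (by omega) (by omega) hv (by omega) (by omega))
  have odds : ∀ w ∈ S, w.val % 2 = 1 → w = v₁ ∨ w = v₂ := by
    intro w hw hpw
    by_contra! h
    exact hS (crownGraph_induce_preconnected_of_three hv₁ hv₂ hw hu₁ hu₂ hv (Ne.symm h.1)
      (Ne.symm h.2) (by omega) (by omega) hu (by omega) (by omega))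
  have mated : ∀ u ∈ S, u.val % 2 = 0 → ∃ m ∈ S, m.val % 2 = 1 ∧ m.val / 2 = u.val / 2 := by
    intro u hu hpu
    by_contra! h
    exact hS (crownGraph_induce_preconnected_of_unmated hu hv₁ hv₂ hv (by omega) (by omega)
      fun y hy hpy => h y hy (by omega))
  obtain ⟨m₁, hm₁, hpm₁, hm₁u⟩ := mated u₁ hu₁ hpu₁
  obtain ⟨m₂, hm₂, hpm₂, hm₂u⟩ := mated u₂ hu₂ hpu₂
  have hm₁v := odds m₁ hm₁ hpm₁
  have hm₂v := odds m₂ hm₂ hpm₂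
  constructor
  · intro hx
    rcases Nat.mod_two_eq_zero_or_one x.val with hpx | hpx
    · have := evens x hx hpx
      simp only [Fin.ext_iff] at this
      omega
    · have := odds x hx hpx
      simp only [Fin.ext_iff] at this hm₁v hm₂v
      omega
  · intro hx
    have : x = u₁ ∨ x = m₁ ∨ x = u₂ ∨ x = m₂ := by
      simp only [Fin.ext_iff]
      omega
    rcases this with rfl | rfl | rfl | rfl <;> assumption

theorem crownGraph_exists_two_pairs_of_forall_joins {e o : Fin (2 * n)} (he : e ∉ S)
    (hpe : e.val % 2 = 0) (ho : o ∉ S) (hpo : o.val % 2 = 1)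
    (h : ∀ i ∉ S, (crownGraph n).JoinsTwoComponents S i) :
    ∃ a b : Fin (2 * n), a.val % 2 = 0 ∧ b.val % 2 = 0 ∧ a ≠ b ∧
      ∀ x, x ∈ S ↔ x.val / 2 = a.val / 2 ∨ x.val / 2 = b.val / 2 := by
  obtain ⟨v₁, v₂, hev₁, hev₂, hv⟩ := h e he
  obtain ⟨u₁, u₂, hou₁, hou₂, hu⟩ := h o ho
  rw [crownGraph_adj_iff] at hev₁ hev₂ hou₁ hou₂
  have distinct : ∀ {a b : S}, ¬ ((crownGraph n).induce S).Reachable a b → a.1 ≠ b.1 :=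
    fun hab heq => hab (Subtype.ext heq ▸ Reachable.refl _)
  exact ⟨u₁, u₂, by omega, by omega, distinct hu,
    crownGraph_mem_iff_of_not_preconnected u₁.2 u₂.2 v₁.2 v₂.2 (distinct hu) (distinct hv)
      (by omega) (by omega) (by omega) (by omega) fun hS => hv (hS v₁ v₂)⟩

theorem crownGraph_joins_of_two_pairs {a b i : Fin (2 * n)} (ha : a.val % 2 = 0)
    (hb : b.val % 2 = 0) (hab : a ≠ b)
    (hS : ∀ x, x ∈ S ↔ x.val / 2 = a.val / 2 ∨ x.val / 2 = b.val / 2) (hi : i ∉ S) :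
    (crownGraph n).JoinsTwoComponents S i := by
  have hab' := Fin.val_ne_of_ne hab
  have hi' := (hS i).not.mp hi
  -- the neighbours of `i` in `S`: the vertices of the other side in the two pairs
  obtain ⟨a', ha'⟩ : ∃ a' : Fin (2 * n), a'.val = a.val + (1 - i.val % 2) := ⟨⟨_, by omega⟩, rfl⟩
  obtain ⟨b', hb'⟩ : ∃ b' : Fin (2 * n), b'.val = b.val + (1 - i.val % 2) := ⟨⟨_, by omega⟩, rfl⟩
  -- an edge of `S` changes both the side and the pair, so it preserves this colour
  let f : Fin (2 * n) → Bool := fun x => decide (x.val % 2 = 0 ↔ x.val / 2 = a.val / 2)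
  have hf : ∀ x y : S, ((crownGraph n).induce S).Adj x y → f x = f y := by
    intro x y hxy
    have := crownGraph_adj_iff.mp (show (crownGraph n).Adj x y from hxy)
    have hx := (hS x).mp x.2
    have hy := (hS y).mp y.2
    simp only [f, decide_eq_decide]
    omega
  have hia : (crownGraph n).Adj i a' := crownGraph_adj_iff.mpr (by omega)
  have hib : (crownGraph n).Adj i b' := crownGraph_adj_iff.mpr (by omega)
  refine ⟨⟨a', (hS a').mpr (by omega)⟩, ⟨b', (hS b').mpr (by omega)⟩, hia, hib, fun h => ?_⟩
  have : f a' = f b' := h.apply_eq_of_adj (f := fun x : S => f x) hf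
  simp only [f, decide_eq_decide] at this
  omega

end Crown

section Parts

variable {n : ℕ}

theorem mem_crownX {x : Fin (2 * n)} : x ∈ crownX n ↔ x.val % 2 = 0 := by
  simp [crownX]

theorem mem_crownY {x : Fin (2 * n)} : x ∈ crownY n ↔ x.val % 2 = 1 := by
  simp [crownY]

theorem card_crownX : (crownX n).card = n := by
  refine (Finset.card_nbij' (t := Finset.univ) (fun x => ⟨x.val / 2, by omega⟩)
    (fun k => ⟨2 * k.val, by omega⟩) ?_ ?_ ?_ ?_).trans (Finset.card_fin n)
  all_goals intro x; simp [crownX, Fin.ext_iff]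
  omega

theorem finSucc_val_of_even {a : Fin (2 * n)} (ha : a.val % 2 = 0) :
    (finSucc a).val = a.val + 1 :=
  Nat.mod_eq_of_lt (by have := a.isLt; omega)

theorem mem_union_image_finSucc_iff {A : Finset (Fin (2 * n))} (hA : A ⊆ crownX n)
    {x : Fin (2 * n)} : x ∈ A ∪ A.image finSucc ↔ ∃ a ∈ A, a.val / 2 = x.val / 2 := by
  simp only [Finset.mem_union, Finset.mem_image]
  constructor
  · rintro (hx | ⟨a, ha, rfl⟩)
    · exact ⟨x, hx, rfl⟩
    · have hpa := mem_crownX.mp (hA ha)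
      exact ⟨a, ha, by rw [finSucc_val_of_even hpa]; omega⟩
  · rintro ⟨a, ha, hax⟩
    have hpa := mem_crownX.mp (hA ha)
    rcases (by omega : x.val = a.val ∨ x.val = a.val + 1) with hx | hx
    · exact Or.inl (Fin.ext hx ▸ ha)
    · exact Or.inr ⟨a, ha, Fin.ext (by rw [finSucc_val_of_even hpa, hx])⟩

theorem exists_eq_union_image_finSucc_iff (hn : 2 ≤ n) {T : Finset (Fin (2 * n))} :
    (∃ A ⊆ crownX n, A.card = n - 2 ∧ T = A ∪ A.image finSucc) ↔
      ∃ a b : Fin (2 * n), a.val % 2 = 0 ∧ b.val % 2 = 0 ∧ a ≠ b ∧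
        ∀ x, x ∉ T ↔ x.val / 2 = a.val / 2 ∨ x.val / 2 = b.val / 2 := by
  constructor
  · rintro ⟨A, hAX, hA, rfl⟩
    obtain ⟨a, b, hab, hXA⟩ : ∃ a b, a ≠ b ∧ crownX n \ A = {a, b} :=
      Finset.card_eq_two.mp (by rw [Finset.card_sdiff_of_subset hAX, card_crownX, hA]; omega)
    have hmem : ∀ y, y ∈ crownX n \ A ↔ y = a ∨ y = b := by simp [hXA]
    have ha := hmem a
    have hb := hmem b
    simp only [Finset.mem_sdiff, mem_crownX, true_or, or_true, iff_true] at ha hb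
    refine ⟨a, b, ha.1, hb.1, hab, fun x => ?_⟩
    rw [mem_union_image_finSucc_iff hAX]
    constructor
    · intro hx
      have := (hmem ⟨2 * (x.val / 2), by omega⟩).mp
        (Finset.mem_sdiff.mpr ⟨mem_crownX.mpr (by simp), fun h => hx ⟨_, h, by simp⟩⟩)
      simp only [Fin.ext_iff] at this
      omega
    · rintro hx ⟨c, hc, hcx⟩
      have hpc := mem_crownX.mp (hAX hc)
      rcases hx with hx | hx
      · exact ha.2 ((show c = a from Fin.ext (by omega)) ▸ hc)
      · exact hb.2 ((show c = b from Fin.ext (by omega)) ▸ hc)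
  · rintro ⟨a, b, ha, hb, hab, hT⟩
    have hab' := Fin.val_ne_of_ne hab
    have hsub : {a, b} ⊆ crownX n := by
      simp [Finset.insert_subset_iff, mem_crownX, ha, hb]
    refine ⟨crownX n \ {a, b}, Finset.sdiff_subset, ?_, ?_⟩
    · rw [Finset.card_sdiff_of_subset hsub, card_crownX, Finset.card_pair hab]
    ext x
    rw [mem_union_image_finSucc_iff Finset.sdiff_subset, ← not_iff_not, hT]
    constructor
    · rintro hx ⟨c, hc, hcx⟩
      simp only [Finset.mem_sdiff, mem_crownX, Finset.mem_insert, Finset.mem_singleton,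
        Fin.ext_iff] at hc
      omega
    · intro hx
      by_contra h
      refine hx ⟨⟨2 * (x.val / 2), by omega⟩, Finset.mem_sdiff.mpr ⟨mem_crownX.mpr (by simp), ?_⟩,
        by simp⟩
      simp only [Finset.mem_insert, Finset.mem_singleton, Fin.ext_iff]
      omega

end Parts

theorem crown_cutPointProperty_mixed_general (n : ℕ) (hn : 3 ≤ n) (T : Finset (Fin (2 * n)))
    (hTX : ¬ T ⊆ crownX n) (hTY : ¬ T ⊆ crownY n) :
    cutPointProperty (crownGraph n) (↑T : Set (Fin (2 * n))) ↔
      ∃ A ⊆ crownX n, A.card = n - 2 ∧ T = A ∪ A.image finSucc := by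
  obtain ⟨o, hoT, ho⟩ := Finset.not_subset.mp hTX
  obtain ⟨e, heT, he⟩ := Finset.not_subset.mp hTY
  rw [mem_crownX] at ho
  rw [mem_crownY] at he
  have hT : (↑T : Set (Fin (2 * n))) ≠ ∅ := Set.nonempty_iff_ne_empty.mp ⟨o, hoT⟩
  simp only [cutPointProperty, hT, false_or, gt_iff_lt, numComponents_union_singleton_lt_iff,
    exists_eq_union_image_finSucc_iff (by omega : 2 ≤ n)]
  constructor
  · intro h
    exact crownGraph_exists_two_pairs_of_forall_joins (not_not.mpr heT) (by omega)
      (not_not.mpr hoT) (by omega) fun i hi => h i (not_not.mp hi)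
  · rintro ⟨a, b, ha, hb, hab, hS⟩ i hi
    exact crownGraph_joins_of_two_pairs ha hb hab hS (not_not.mpr hi)

theorem crown_cutPointProperty_mixed (n : ℕ) (hn : 3 ≤ n) (T : Finset (Fin (2 * n)))
    (hne : T.Nonempty) (hTX : ¬ T ⊆ crownX n) (hTY : ¬ T ⊆ crownY n) :
    cutPointProperty (crownGraph n) (↑T : Set (Fin (2 * n))) ↔
      ∃ A ⊆ crownX n, A.card = n - 2 ∧ T = A ∪ A.image finSucc :=
  crown_cutPointProperty_mixed_general n hn T hTX hTY
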